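/- PEP for high-order SBP semidiscretizations: let γ > 1, let f^num be a PEP numerical two-point flux, let N ∈ ℕ and let D be an N×N real matrix whose rows sum to zero (a consistent derivative operator). Let v ∈ ℝ, p > 0, densities ρ_i > 0 with states u_i = (ρ_i, v, p), and α ∈ ℝ. Define ρ̃_i = ρ_i + α Σ_l D_{i,l} f^num_ρ(u_i, u_l). Then ρ_i v + α Σ_l D_{i,l} f^num_{ρv}(u_i, u_l) = ρ̃_i v and (ρ_i v²/2 + p/(γ−1)) + α Σ_l D_{i,l} f^num_{ρe}(u_i, u_l) = ρ̃_i v²/2 + p/(γ−1); i.e., adding any scalar multiple of the split-form semidiscrete operator to a numerical solution in pressure equilibrium yields conserved variables again in pressure equilibrium with the same velocity v and pressure p. -/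
import Mathlib


noncomputable section
open Real BigOperators

/-- A state `u = (ρ, v, p)` of the 1D compressible Euler equations:
density `u.1`, velocity `u.2.1`, pressure `u.2.2`. -/
abbrev EulerState := ℝ × ℝ × ℝ

/-- Pressure equilibrium preservation (PEP). -/
def IsPEP (f : EulerState → EulerState → EulerState) : Prop :=
  ∃ c₁ c₂ : ℝ → ℝ → ℝ, ∀ ρm ρp v p : ℝ, 0 < ρm → 0 < ρp → 0 < p →
    (f (ρm, v, p) (ρp, v, p)).2.1 = v * (f (ρm, v, p) (ρp, v, p)).1 + c₁ p v ∧
    (f (ρm, v, p) (ρp, v, p)).2.2 = (v^2/2) * (f (ρm, v, p) (ρp, v, p)).1 + c₂ p v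

/-- PEP for high-order SBP semidiscretizations. Adding any scalar
multiple of the split-form semidiscrete operator (built from a consistent
derivative matrix `D` whose rows sum to zero and a PEP flux) to a numerical
solution in pressure equilibrium yields conserved variables again in pressure
equilibrium with the same velocity `v` and pressure `p`. -/
theorem pep_high_order_sbp
    (γ : ℝ) (hγ : 1 < γ)
    (f : EulerState → EulerState → EulerState) (hPEP : IsPEP f)
    (N : ℕ) (D : Matrix (Fin N) (Fin N) ℝ) (hD : ∀ i, ∑ l, D i l = 0)
    (v p : ℝ) (hp : 0 < p) (ρ : Fin N → ℝ) (hρ : ∀ i, 0 < ρ i) (α : ℝ) :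
    ∀ i : Fin N,
      (ρ i * v + α * ∑ l, D i l * (f (ρ i, v, p) (ρ l, v, p)).2.1
        = (ρ i + α * ∑ l, D i l * (f (ρ i, v, p) (ρ l, v, p)).1) * v)
      ∧
      ((ρ i * v^2/2 + p/(γ-1)) + α * ∑ l, D i l * (f (ρ i, v, p) (ρ l, v, p)).2.2
        = (ρ i + α * ∑ l, D i l * (f (ρ i, v, p) (ρ l, v, p)).1) * v^2/2 + p/(γ-1)) := by
  obtain ⟨c₁, c₂, hc⟩ := hPEP
  intro i
  have h1 : ∑ l, D i l * (f (ρ i, v, p) (ρ l, v, p)).2.1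
      = v * ∑ l, D i l * (f (ρ i, v, p) (ρ l, v, p)).1 := by
    rw [Finset.mul_sum]
    calc ∑ l, D i l * (f (ρ i, v, p) (ρ l, v, p)).2.1
        = ∑ l, (D i l * (v * (f (ρ i, v, p) (ρ l, v, p)).1) + D i l * c₁ p v) := by
          apply Finset.sum_congr rfl; intro l _
          rw [(hc (ρ i) (ρ l) v p (hρ i) (hρ l) hp).1]; ring
      _ = ∑ l, D i l * (v * (f (ρ i, v, p) (ρ l, v, p)).1)
            + (∑ l, D i l) * c₁ p v := by rw [Finset.sum_add_distrib, Finset.sum_mul]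
      _ = ∑ l, v * (D i l * (f (ρ i, v, p) (ρ l, v, p)).1) := by
          rw [hD i]; ring_nf; apply Finset.sum_congr rfl; intro l _; ring
  have h2 : ∑ l, D i l * (f (ρ i, v, p) (ρ l, v, p)).2.2
      = (v^2/2) * ∑ l, D i l * (f (ρ i, v, p) (ρ l, v, p)).1 := by
    rw [Finset.mul_sum]
    calc ∑ l, D i l * (f (ρ i, v, p) (ρ l, v, p)).2.2
        = ∑ l, (D i l * ((v^2/2) * (f (ρ i, v, p) (ρ l, v, p)).1) + D i l * c₂ p v) := by
          apply Finset.sum_congr rfl; intro l _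
          rw [(hc (ρ i) (ρ l) v p (hρ i) (hρ l) hp).2]; ring
      _ = ∑ l, D i l * ((v^2/2) * (f (ρ i, v, p) (ρ l, v, p)).1)
            + (∑ l, D i l) * c₂ p v := by rw [Finset.sum_add_distrib, Finset.sum_mul]
      _ = ∑ l, (v^2/2) * (D i l * (f (ρ i, v, p) (ρ l, v, p)).1) := by
          rw [hD i]; ring_nf; apply Finset.sum_congr rfl; intro l _; ring
  constructor
  · rw [h1]; ring
  · rw [h2]; ring
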